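/- Let D : [0,1) → [0,1) be the doubling map D(x) = 2x mod 1, and let λ denote Lebesgue measure on [0,1). For every Hölder continuous φ : [0,1) → ℝ and every bounded measurable ψ : [0,1) → ℝ there exist constants C > 0 and ρ ∈ (0,1) such that for all n ≥ 1, |∫ φ·(ψ ∘ D^n) dλ − (∫ φ dλ)(∫ ψ dλ)| ≤ C ρ^n; that is, the doubling map exhibits exponential decay of correlations with respect to Lebesgue measure. -/

import Mathlib

open MeasureTheory Set NNReal

/-- The doubling map `D(x) = 2x mod 1` on `[0,1)`. -/
noncomputable def doubling (x : ℝ) : ℝ := Int.fract (2 * x)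

/-!
On each interval `[k/2ⁿ, (k+1)/2ⁿ)` the map `Dⁿ` is the affine bijection `x ↦ 2ⁿx - k` onto
`[0,1)`. So under Lebesgue measure the digit `⌊2ⁿx⌋` and the point `Dⁿx` are independent and `Dⁿx`
is uniformly distributed: every function of `⌊2ⁿx⌋`, in particular the step function
`x ↦ φ(⌊2ⁿx⌋/2ⁿ)`, is exactly uncorrelated with `ψ ∘ Dⁿ`. Hölder continuity puts this step
function within `C 2^{-rn}` of `φ`, and replacing `φ` by it changes the correlation by at most
`2 C M 2^{-rn}` when `|ψ| ≤ M`.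
-/

lemma Int.fract_two_mul_fract (y : ℝ) : Int.fract (2 * Int.fract y) = Int.fract (2 * y) :=
  Int.fract_eq_fract.2 ⟨-2 * ⌊y⌋, by push_cast [Int.fract]; ring⟩

lemma doubling_iterate_apply {n : ℕ} (hn : n ≠ 0) (x : ℝ) :
    doubling^[n] x = Int.fract (2 ^ n * x) := by
  induction n with
  | zero => exact absurd rfl hn
  | succ m ih =>
    rcases eq_or_ne m 0 with rfl | hm
    · simp [doubling]
    · rw [Function.iterate_succ_apply', ih hm, doubling, Int.fract_two_mul_fract, pow_succ',
        mul_assoc]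

lemma measurable_doubling : Measurable doubling :=
  (measurable_const.mul measurable_id).fract

section NatFloor

variable {N : ℕ} {x : ℝ}

lemma natFloor_mul_div_mem_Ico (hN : N ≠ 0) (hx : x ∈ Ico (0 : ℝ) 1) :
    (⌊N * x⌋₊ : ℝ) / N ∈ Ico (0 : ℝ) 1 := by
  have hN' : (0 : ℝ) < N := by positivity
  refine ⟨by positivity, (div_lt_one hN').2 ?_⟩
  exact (Nat.floor_le (by nlinarith [hx.1])).trans_lt (by nlinarith [hx.2])

lemma dist_natFloor_mul_div_le (hN : N ≠ 0) (hx : 0 ≤ x) :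
    dist x (⌊N * x⌋₊ / N) ≤ (N : ℝ)⁻¹ := by
  have hN' : (0 : ℝ) < N := by positivity
  have hlo := Nat.floor_le (mul_nonneg hN'.le hx)
  have hhi := Nat.lt_floor_add_one ((N : ℝ) * x)
  have hsplit : x - ⌊N * x⌋₊ / N = (N * x - ⌊N * x⌋₊) * (N : ℝ)⁻¹ := by field_simp
  rw [Real.dist_eq, hsplit, abs_mul, abs_of_nonneg (sub_nonneg.2 hlo), abs_inv, abs_of_pos hN']
  exact mul_le_of_le_one_left (inv_nonneg.2 hN'.le) (by linarith)

end NatFloor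

section DigitIndependence

variable (g : ℕ → ℝ) {ψ : ℝ → ℝ}

lemma eqOn_Ico_natFloor_mul_fract (k : ℕ) :
    EqOn (fun u => g ⌊u⌋₊ * ψ (Int.fract u)) (fun u => g k * ψ (u - k)) (Ico k (k + 1)) := by
  intro u hu
  have hfloor : ⌊u⌋ = k := Int.floor_eq_on_Ico k u (by exact_mod_cast hu)
  simp only [Nat.floor_eq_on_Ico k u hu, Int.fract, hfloor, Int.cast_natCast]

lemma intervalIntegrable_natFloor_mul_fract (hψ : IntervalIntegrable ψ volume 0 1) (k : ℕ) :
    IntervalIntegrable (fun u => g ⌊u⌋₊ * ψ (Int.fract u)) volume k (k + 1) := by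
  have hshift : IntervalIntegrable (fun u => g k * ψ (u - k)) volume k (k + 1) := by
    simpa [add_comm] using (hψ.comp_sub_right (k : ℝ)).const_mul (g k)
  refine hshift.congr_uIoo fun u hu => (eqOn_Ico_natFloor_mul_fract g k ?_).symm
  rw [uIoo_of_le (by linarith)] at hu
  exact Ioo_subset_Ico_self hu

lemma intervalIntegral_natFloor_mul_fract_unit (k : ℕ) :
    ∫ u in (k : ℝ)..k + 1, g ⌊u⌋₊ * ψ (Int.fract u) = g k * ∫ u in (0 : ℝ)..1, ψ u := by
  rw [intervalIntegral.integral_congr_Ioo_of_le (by linarith)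
      ((eqOn_Ico_natFloor_mul_fract g k).mono Ioo_subset_Ico_self),
    intervalIntegral.integral_const_mul, intervalIntegral.integral_comp_sub_right]
  simp

lemma intervalIntegral_natFloor_mul_fract (hψ : IntervalIntegrable ψ volume 0 1) (N : ℕ) :
    ∫ u in (0 : ℝ)..N, g ⌊u⌋₊ * ψ (Int.fract u)
      = (∑ k ∈ Finset.range N, g k) * ∫ u in (0 : ℝ)..1, ψ u := by
  have hsum := intervalIntegral.sum_integral_adjacent_intervals (a := fun k : ℕ => (k : ℝ))
    (n := N) fun k _ => by simpa using intervalIntegrable_natFloor_mul_fract g hψ k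
  simp only [Nat.cast_add, Nat.cast_one, Nat.cast_zero,
    intervalIntegral_natFloor_mul_fract_unit] at hsum
  rw [← hsum, Finset.sum_mul]

lemma intervalIntegral_natFloor_mul_fract_comp_mul (hψ : IntervalIntegrable ψ volume 0 1)
    {N : ℕ} (hN : N ≠ 0) :
    ∫ x in (0 : ℝ)..1, g ⌊N * x⌋₊ * ψ (Int.fract (N * x))
      = (∑ k ∈ Finset.range N, g k) / N * ∫ u in (0 : ℝ)..1, ψ u := by
  rw [intervalIntegral.integral_comp_mul_left (fun u => g ⌊u⌋₊ * ψ (Int.fract u))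
    (Nat.cast_ne_zero.2 hN), mul_zero, mul_one, intervalIntegral_natFloor_mul_fract g hψ,
    smul_eq_mul, ← mul_assoc, inv_mul_eq_div]

lemma setIntegral_Ico_eq_intervalIntegral {a b : ℝ} (hab : a ≤ b) (f : ℝ → ℝ) :
    ∫ x in Ico a b, f x = ∫ x in a..b, f x := by
  rw [intervalIntegral.integral_of_le hab, integral_Ico_eq_integral_Ioo,
    integral_Ioc_eq_integral_Ioo]

theorem setIntegral_natFloor_mul_fract_comp_mul_eq_mul (hψ : IntegrableOn ψ (Ico 0 1))
    {N : ℕ} (hN : N ≠ 0) :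
    ∫ x in Ico (0 : ℝ) 1, g ⌊N * x⌋₊ * ψ (Int.fract (N * x))
      = (∫ x in Ico (0 : ℝ) 1, g ⌊N * x⌋₊) * ∫ x in Ico (0 : ℝ) 1, ψ x := by
  have hψ' : IntervalIntegrable ψ volume 0 1 := by
    rwa [intervalIntegrable_iff_integrableOn_Ioc_of_le zero_le_one,
      integrableOn_Ioc_iff_integrableOn_Ioo, ← integrableOn_Ico_iff_integrableOn_Ioo]
  have hone := intervalIntegral_natFloor_mul_fract_comp_mul g
    (intervalIntegrable_const (c := (1 : ℝ))) hN
  simp only [mul_one, intervalIntegral.integral_const, sub_zero, one_smul] at hone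
  simp only [setIntegral_Ico_eq_intervalIntegral zero_le_one, hone,
    intervalIntegral_natFloor_mul_fract_comp_mul g hψ' hN]

end DigitIndependence

namespace HolderOnWith

variable {C r : ℝ≥0} {f : ℝ → ℝ}

lemma abs_le_of_mem_Ico (hf : HolderOnWith C r f (Ico 0 1)) {x : ℝ} (hx : x ∈ Ico (0 : ℝ) 1) :
    |f x| ≤ |f 0| + C := by
  have hdist : dist x 0 ≤ 1 := by rw [Real.dist_0_eq_abs, abs_of_nonneg hx.1]; exact hx.2.le
  have := hf.dist_le_of_le hx ⟨le_rfl, one_pos⟩ hdist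
  rw [Real.one_rpow, mul_one, Real.dist_eq] at this
  linarith [abs_sub_abs_le_abs_sub (f x) (f 0)]

lemma integrableOn_Ico (hf : HolderOnWith C r f (Ico 0 1)) (hr : 0 < r) :
    IntegrableOn f (Ico 0 1) :=
  Integrable.of_bound ((hf.continuousOn hr).aestronglyMeasurable measurableSet_Ico) _
    (ae_restrict_of_forall_mem measurableSet_Ico fun _ hx => hf.abs_le_of_mem_Ico hx)

lemma integrableOn_Ico_comp_natFloor_mul_div (hf : HolderOnWith C r f (Ico 0 1)) {N : ℕ}
    (hN : N ≠ 0) : IntegrableOn (fun x : ℝ => f (⌊N * x⌋₊ / N)) (Ico 0 1) := by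
  have hmeas : Measurable fun x : ℝ => f (⌊N * x⌋₊ / N) :=
    (measurable_from_nat (f := fun k : ℕ => f (k / N))).comp (measurable_const_mul _).nat_floor
  exact Integrable.of_bound hmeas.aestronglyMeasurable _
    (ae_restrict_of_forall_mem measurableSet_Ico fun _ hx =>
      hf.abs_le_of_mem_Ico (natFloor_mul_div_mem_Ico hN hx))

lemma abs_sub_comp_natFloor_mul_div_le (hf : HolderOnWith C r f (Ico 0 1)) {N : ℕ}
    (hN : N ≠ 0) {x : ℝ} (hx : x ∈ Ico (0 : ℝ) 1) :
    |f x - f (⌊N * x⌋₊ / N)| ≤ C * ((N : ℝ)⁻¹) ^ (r : ℝ) := by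
  simpa only [Real.dist_eq] using
    hf.dist_le_of_le hx (natFloor_mul_div_mem_Ico hN hx) (dist_natFloor_mul_div_le hN hx.1)

end HolderOnWith

instance : IsProbabilityMeasure (volume.restrict (Ico (0 : ℝ) 1)) := ⟨by simp⟩

section Correlation

variable {Ω : Type*} [MeasurableSpace Ω] {μ : Measure Ω} [IsProbabilityMeasure μ]

lemma integral_sub_const {f : Ω → ℝ} (hf : Integrable f μ) (c : ℝ) :
    ∫ x, (f x - c) ∂μ = ∫ x, f x ∂μ - c := by
  rw [integral_sub hf (integrable_const c), integral_const, probReal_univ, one_smul]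

/-- Writing the correlation as `∫ φ (Ψ - m)`, it is `∫ (φ - φ') (Ψ - m)` once `φ'` has
correlation zero, and `|Ψ - m| ≤ 2M`. -/
theorem abs_integral_mul_sub_le_of_approx {φ φ' Ψ : Ω → ℝ} {m M ε : ℝ}
    (hφ : Integrable φ μ) (hφ' : Integrable φ' μ) (hΨ : AEStronglyMeasurable Ψ μ)
    (hΨM : ∀ᵐ x ∂μ, |Ψ x| ≤ M) (hm : |m| ≤ M) (hε : ∀ᵐ x ∂μ, |φ x - φ' x| ≤ ε)
    (hφ'Ψ : ∫ x, φ' x * Ψ x ∂μ = (∫ x, φ' x ∂μ) * m) :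
    |∫ x, φ x * Ψ x ∂μ - (∫ x, φ x ∂μ) * m| ≤ ε * (2 * M) := by
  have hΨm : ∀ᵐ x ∂μ, ‖Ψ x - m‖ ≤ 2 * M := hΨM.mono fun x hx =>
    (abs_sub _ _).trans (by linarith)
  have hcentered (f : Ω → ℝ) (hf : Integrable f μ) :
      ∫ x, f x * Ψ x ∂μ - (∫ x, f x ∂μ) * m = ∫ x, f x * (Ψ x - m) ∂μ := by
    simp only [mul_sub]
    rw [integral_sub (hf.mul_bdd hΨ hΨM) (hf.mul_const m), integral_mul_const]
  have hmul (f : Ω → ℝ) (hf : Integrable f μ) : Integrable (fun x => f x * (Ψ x - m)) μ :=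
    hf.mul_bdd (hΨ.sub aestronglyMeasurable_const) hΨm
  have hφ'_uncorrelated : ∫ x, φ' x * (Ψ x - m) ∂μ = 0 := by
    rw [← hcentered φ' hφ', hφ'Ψ, sub_self]
  calc |∫ x, φ x * Ψ x ∂μ - (∫ x, φ x ∂μ) * m|
      = ‖∫ x, (φ x - φ' x) * (Ψ x - m) ∂μ‖ := by
        simp only [sub_mul]
        rw [integral_sub (hmul φ hφ) (hmul φ' hφ'), hφ'_uncorrelated, sub_zero, hcentered φ hφ,
          Real.norm_eq_abs]
    _ ≤ ε * (2 * M) * μ.real univ := norm_integral_le_of_norm_le_const <| by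
        filter_upwards [hε, hΨm] with x hx hx'
        rw [norm_mul, Real.norm_eq_abs]
        exact mul_le_mul hx hx' (norm_nonneg _) ((abs_nonneg _).trans hx)
    _ = ε * (2 * M) := by rw [probReal_univ, mul_one]

end Correlation

/-- The doubling map `D(x) = 2x mod 1` exhibits exponential decay of
correlations with respect to Lebesgue measure `λ` on `[0,1)`: for every Hölder continuous
`φ` and bounded measurable `ψ` there are `C > 0` and `ρ ∈ (0,1)` such that for all `n ≥ 1`,
`|∫ φ · (ψ ∘ D^n) dλ − (∫ φ dλ)(∫ ψ dλ)| ≤ C ρ^n`. -/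
theorem doubling_exponential_decay_of_correlations
    (φ : ℝ → ℝ) (hφ : ∃ C r : ℝ≥0, 0 < r ∧ r ≤ 1 ∧ HolderOnWith C r φ (Set.Ico (0 : ℝ) 1))
    (ψ : ℝ → ℝ) (hψmeas : Measurable ψ) (hψbdd : ∃ M : ℝ, ∀ x, |ψ x| ≤ M) :
    ∃ C : ℝ, 0 < C ∧ ∃ ρ : ℝ, ρ ∈ Set.Ioo (0 : ℝ) 1 ∧ ∀ n : ℕ, 1 ≤ n →
      |∫ x in Set.Ico (0 : ℝ) 1, φ x * ψ (doubling^[n] x) -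
          (∫ x in Set.Ico (0 : ℝ) 1, φ x) * ∫ x in Set.Ico (0 : ℝ) 1, ψ x|
        ≤ C * ρ ^ n := by
  obtain ⟨C, r, hr, -, hφC⟩ := hφ
  obtain ⟨M, hM⟩ := hψbdd
  have hM0 : 0 ≤ M := (abs_nonneg _).trans (hM 0)
  have hψint : IntegrableOn ψ (Ico 0 1) :=
    Integrable.of_bound hψmeas.aestronglyMeasurable M (ae_of_all _ hM)
  have hm : |∫ x in Ico (0 : ℝ) 1, ψ x| ≤ M := by
    simpa using norm_integral_le_of_norm_le_const (μ := volume.restrict (Ico (0 : ℝ) 1))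
      (f := ψ) (ae_of_all _ hM)
  refine ⟨2 * C * M + 1, by positivity, 2⁻¹ ^ (r : ℝ),
    ⟨by positivity, Real.rpow_lt_one (by norm_num) (by norm_num) hr⟩, fun n hn => ?_⟩
  have hN : 2 ^ n ≠ 0 := pow_ne_zero n two_ne_zero
  have hiter (x : ℝ) : doubling^[n] x = Int.fract ((2 ^ n : ℕ) * x) := by
    rw [doubling_iterate_apply (by omega)]; push_cast; rfl
  have hΨ : Measurable fun x => ψ (doubling^[n] x) := hψmeas.comp (measurable_doubling.iterate n)
  have hbound := abs_integral_mul_sub_le_of_approx (μ := volume.restrict (Ico 0 1))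
    (hφC.integrableOn_Ico hr) (hφC.integrableOn_Ico_comp_natFloor_mul_div hN)
    hΨ.aestronglyMeasurable (ae_of_all _ fun _ => hM _) hm
    (ae_restrict_of_forall_mem measurableSet_Ico fun _ hx =>
      hφC.abs_sub_comp_natFloor_mul_div_le hN hx)
    (by
      simp only [hiter]
      exact setIntegral_natFloor_mul_fract_comp_mul_eq_mul (fun k => φ (k / (2 ^ n : ℕ))) hψint hN)
  have hrate : (((2 ^ n : ℕ) : ℝ)⁻¹) ^ (r : ℝ) = (2⁻¹ ^ (r : ℝ)) ^ n := by
    rw [Real.rpow_pow_comm (by norm_num), Nat.cast_pow, Nat.cast_ofNat, inv_pow]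
  -- The first integral of the statement extends over the whole difference.
  rw [integral_sub_const ((hφC.integrableOn_Ico hr).mul_bdd hΨ.aestronglyMeasurable
    (ae_of_all _ fun _ => hM _))]
  calc _ ≤ C * (2⁻¹ ^ (r : ℝ)) ^ n * (2 * M) := by simpa only [hrate] using hbound
    _ = 2 * C * M * (2⁻¹ ^ (r : ℝ)) ^ n := by ring
    _ ≤ (2 * C * M + 1) * (2⁻¹ ^ (r : ℝ)) ^ n := by gcongr; linarith
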